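/- Let g : ℝ⁵ → ℝ, written g(y, y₁, y₂, y₃, y₄), be differentiable, and suppose g is invariant under the interchange y₁ ↔ y₂, under the interchange y₃ ↔ y₄, and under the simultaneous interchange (y₁,y₂) ↔ (y₃,y₄). Define f : ℝ⁶ → ℝ⁶ by f_i(x) = g(x_i, x_{i−2}, x_{i−1}, x_{i+1}, x_{i+2}) with indices taken mod 6. Let ⋈ be an equivalence relation on {1,…,6} with polydiagonal subspace Θ = Δ_⋈ ⊆ ℝ⁶, and suppose f(Θ) ⊆ Θ. If there exists a ∈ ℝ such that the partial derivative of g with respect to its second argument at (a,a,a,a,a) is nonzero (the generic condition), then A·x ∈ Θ for every x ∈ Θ; that is, every polydiagonal subspace invariant under f is, generically, a synchrony subspace of the network G₆. -/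
import Mathlib


open Matrix

/-- The adjacency matrix of the ring network G₆ of six cells with nearest and
next-nearest neighbour coupling: `A i j = 1` iff `i - j ≡ ±1, ±2 (mod 6)`. -/
def A6 : Matrix (Fin 6) (Fin 6) ℝ :=
  Matrix.of fun i j =>
    if i - j = 1 ∨ i - j = 2 ∨ j - i = 1 ∨ j - i = 2 then 1 else 0

/-- The general admissible vector field (5.1) of the network G₆ built from a
generating function g(y, y₁, y₂, y₃, y₄). -/
def G6field (g : (Fin 5 → ℝ) → ℝ) : (Fin 6 → ℝ) → (Fin 6 → ℝ) :=
  fun x i => g ![x i, x (i - 2), x (i - 1), x (i + 1), x (i + 2)]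

lemma eta5 (v : Fin 5 → ℝ) : v = ![v 0, v 1, v 2, v 3, v 4] := by
  funext i; fin_cases i <;> rfl


/-- Generically (if ∂g/∂y₁ is nonzero at some fully synchronous point), every
polydiagonal subspace invariant under the admissible vector field of G₆ is a
synchrony subspace of G₆, i.e. invariant under its adjacency matrix. -/
theorem stmt_16 (g : (Fin 5 → ℝ) → ℝ) (hg : Differentiable ℝ g)
    (h12 : ∀ y y1 y2 y3 y4 : ℝ, g ![y, y1, y2, y3, y4] = g ![y, y2, y1, y3, y4])
    (h34 : ∀ y y1 y2 y3 y4 : ℝ, g ![y, y1, y2, y3, y4] = g ![y, y1, y2, y4, y3])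
    (hsw : ∀ y y1 y2 y3 y4 : ℝ, g ![y, y1, y2, y3, y4] = g ![y, y3, y4, y1, y2])
    (r : Fin 6 → Fin 6 → Prop) (hr : Equivalence r)
    (hf : ∀ x : Fin 6 → ℝ, (∀ i j, r i j → x i = x j) →
      ∀ i j, r i j → G6field g x i = G6field g x j)
    (hgen : ∃ a : ℝ, fderiv ℝ g (fun _ => a) (Pi.single 1 1) ≠ 0) :
    ∀ x : Fin 6 → ℝ, (∀ i j, r i j → x i = x j) →
      ∀ i j, r i j → A6.mulVec x i = A6.mulVec x j := by
  obtain ⟨a, hc⟩ := hgen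
  set p : Fin 5 → ℝ := fun _ => a with hp
  set D := fderiv ℝ g p with hDdef
  -- invariance of the derivative under coordinate permutations fixing p
  have key : ∀ τ : Fin 5 → Fin 5, (∀ v : Fin 5 → ℝ, g (v ∘ τ) = g v) →
      ∀ w : Fin 5 → ℝ, D (w ∘ τ) = D w := by
    intro τ hτ w
    set L : (Fin 5 → ℝ) →L[ℝ] (Fin 5 → ℝ) :=
      LinearMap.toContinuousLinearMap (LinearMap.funLeft ℝ ℝ τ) with hL
    have hLap : ∀ v : Fin 5 → ℝ, L v = v ∘ τ := fun v => rfl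
    have h1 : HasFDerivAt g D p := (hg p).hasFDerivAt
    have h2 : HasFDerivAt (fun v => g (L v)) (D.comp L) p := by
      have hLp : L p = p := rfl
      exact (hLp ▸ h1 : HasFDerivAt g D (L p)).comp p (L.hasFDerivAt)
    have h3 : (fun v => g (L v)) = g := by
      funext v; rw [hLap]; exact hτ v
    rw [h3] at h2
    have := h1.unique h2
    calc D (w ∘ τ) = (D.comp L) w := by rw [ContinuousLinearMap.comp_apply, hLap]
      _ = D w := by rw [← this]
  -- the three symmetries as permutation invariances
  have s12 : ∀ v : Fin 5 → ℝ, g (v ∘ ![0, 2, 1, 3, 4]) = g v := by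
    intro v
    have h1 : (v ∘ ![0, 2, 1, 3, 4]) = ![v 0, v 2, v 1, v 3, v 4] := by
      funext i; fin_cases i <;> rfl
    rw [h1, ← h12]
    exact congrArg g (eta5 v).symm
  have s34 : ∀ v : Fin 5 → ℝ, g (v ∘ ![0, 1, 2, 4, 3]) = g v := by
    intro v
    have h1 : (v ∘ ![0, 1, 2, 4, 3]) = ![v 0, v 1, v 2, v 4, v 3] := by
      funext i; fin_cases i <;> rfl
    rw [h1, ← h34]
    exact congrArg g (eta5 v).symm
  have ssw : ∀ v : Fin 5 → ℝ, g (v ∘ ![0, 3, 4, 1, 2]) = g v := by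
    intro v
    have h1 : (v ∘ ![0, 3, 4, 1, 2]) = ![v 0, v 3, v 4, v 1, v 2] := by
      funext i; fin_cases i <;> rfl
    rw [h1, ← hsw]
    exact congrArg g (eta5 v).symm
  set c : ℝ := D (Pi.single 1 1) with hcdef
  set d : ℝ := D (Pi.single 0 1) with hddef
  have e2 : D (Pi.single 2 1) = c := by
    have h := key ![0, 2, 1, 3, 4] s12 (Pi.single 1 1)
    rw [hcdef, ← h]
    congr 1
    funext i; fin_cases i <;> simp [Pi.single_apply]
  have e3 : D (Pi.single 3 1) = c := by
    have h := key ![0, 3, 4, 1, 2] ssw (Pi.single 1 1)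
    rw [hcdef, ← h]
    congr 1
    funext i; fin_cases i <;> simp [Pi.single_apply]
  have e4 : D (Pi.single 4 1) = c := by
    have h := key ![0, 1, 2, 4, 3] s34 (Pi.single 3 1)
    rw [← e3, ← h]
    congr 1
    funext i; fin_cases i <;> simp [Pi.single_apply]
  have decomp : ∀ v : Fin 5 → ℝ, D v = v 0 * d + (v 1 + v 2 + v 3 + v 4) * c := by
    intro v
    have hv : v = v 0 • (Pi.single 0 1 : Fin 5 → ℝ) + v 1 • (Pi.single 1 1 : Fin 5 → ℝ) +
        v 2 • (Pi.single 2 1 : Fin 5 → ℝ) + v 3 • (Pi.single 3 1 : Fin 5 → ℝ) +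
        v 4 • (Pi.single 4 1 : Fin 5 → ℝ) := by
      funext i; fin_cases i <;> simp [Pi.single_apply]
    conv_lhs => rw [hv]
    simp only [map_add, ContinuousLinearMap.map_smul, smul_eq_mul, e2, e3, e4, ← hcdef, ← hddef]
    ring
  -- main argument
  intro x hx i j hij
  have hA : ∀ k : Fin 6, A6.mulVec x k = x (k - 2) + x (k - 1) + x (k + 1) + x (k + 2) := by
    intro k
    fin_cases k <;>
      simp (config := { decide := true }) [A6, Matrix.mulVec, dotProduct, Fin.sum_univ_six,
        show ((-2 : Fin 6)) = 4 from by decide, show ((-1 : Fin 6)) = 5 from by decide] <;>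
      ring
  set v : Fin 6 → Fin 5 → ℝ :=
    fun k => ![x k, x (k - 2), x (k - 1), x (k + 1), x (k + 2)] with hvdef
  have hder : ∀ k : Fin 6, HasDerivAt (fun t : ℝ => g (p + t • v k)) (D (v k)) 0 := by
    intro k
    have hline : HasDerivAt (fun t : ℝ => p + t • v k) (v k) 0 := by
      simpa using ((hasDerivAt_id (0 : ℝ)).smul_const (v k)).const_add p
    have hg' : HasFDerivAt g D ((fun t : ℝ => p + t • v k) 0) := by
      simpa using (hg p).hasFDerivAt
    exact hg'.comp_hasDerivAt 0 hline
  have heq : (fun t : ℝ => g (p + t • v i)) = fun t : ℝ => g (p + t • v j) := by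
    funext t
    have hx' : ∀ k l, r k l → (fun m => a + t * x m) k = (fun m => a + t * x m) l := by
      intro k l hkl; simp [hx k l hkl]
    have hfe := hf (fun m => a + t * x m) hx' i j hij
    have rewr : ∀ k : Fin 6, G6field g (fun m => a + t * x m) k = g (p + t • v k) := by
      intro k
      unfold G6field
      congr 1
      funext m; fin_cases m <;> simp [hvdef, hp]
    rw [rewr i, rewr j] at hfe
    exact hfe
  have hDij : D (v i) = D (v j) := (hder i).unique (heq ▸ hder j)
  rw [decomp, decomp] at hDij
  have hv0 : v i 0 = x i := rfl
  have hxij : x i = x j := hx i j hij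
  have hsum : (v i 1 + v i 2 + v i 3 + v i 4) * c = (v j 1 + v j 2 + v j 3 + v j 4) * c := by
    have : v i 0 * d = v j 0 * d := by
      show x i * d = x j * d
      rw [hxij]
    linarith [hDij]
  have hsum' : v i 1 + v i 2 + v i 3 + v i 4 = v j 1 + v j 2 + v j 3 + v j 4 :=
    mul_right_cancel₀ hc hsum
  rw [hA i, hA j]
  simpa [hvdef] using hsum'
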